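/- Performing a depth-first search from a root r in a finite connected graph, and outputting each vertex of even depth (distance from r in the DFS tree) when it is first discovered and each vertex of odd depth when its DFS call finishes, produces an ordering of all vertices in which consecutive vertices have distance at most 3 in the graph. -/

import Mathlib

/-- A fuel-bounded depth-first search from vertex `v` at depth `d`, given an
adjacency-list function `adj` and a list `vis` of already-visited vertices.
Returns the new visited list together with the output sequence, where a vertex
of even depth is output when it is first discovered (pre-order) and a vertex of
odd depth is output when its DFS call finishes (post-order). -/
def dfsOut {V : Type} [DecidableEq V] (adj : V → List V) :
    ℕ → List V → V → ℕ → List V × List V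
  | 0, vis, _, _ => (vis, [])
  | (fuel + 1), vis, v, d =>
    let step : List V × List V → V → List V × List V := fun p w =>
      if w ∈ p.1 then p
      else
        let q := dfsOut adj fuel p.1 w (d + 1)
        (q.1, p.2 ++ q.2)
    let r := (adj v).foldl step (v :: vis, [])
    if d % 2 = 0 then (r.1, v :: r.2) else (r.1, r.2 ++ [v])

/-!
By induction along the recursion, the output of the call at a vertex `v` of depth `d` has
consecutive entries at distance at most `3`; it starts at `v` and ends within distance `1` of `v`
if `d` is even, and starts within distance `1` of `v` and ends at `v` if `d` is odd. Seen from
`v`, the outputs of its children (neighbours of `v` of the opposite parity) thus start within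
distance `2` and end within distance `1` of `v` when `d` is even, and the other way round when
`d` is odd, so consecutive children glue with a jump of at most `1 + 2 = 3`, and `v` glues to its
first or last child with a jump of at most `2`. Every call marks its vertex as visited and the
fuel bounds the number of unvisited vertices, so the visited set, which consists of the vertices
output (each once), ends up closed under adjacency and is therefore everything.
-/

variable {V : Type}

theorem SimpleGraph.Reachable.mem_of_forall_adj_mem {G : SimpleGraph V} {s : Set V} {u v : V}
    (h : G.Reachable u v) (hu : u ∈ s) (hs : ∀ x ∈ s, ∀ y, G.Adj x y → y ∈ s) :
    v ∈ s := by
  obtain ⟨p⟩ := h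
  induction p with
  | nil => exact hu
  | cons hxy _ ih => exact ih (hs _ hu _ hxy)

theorem SimpleGraph.dist_le_of_edist_le {G : SimpleGraph V} {u v : V} {n : ℕ}
    (h : G.edist u v ≤ n) : G.dist u v ≤ n :=
  (ENat.toNat_le_toNat h (ENat.natCast_ne_top n)).trans_eq (ENat.toNat_natCast n)

def ExtendsBy (vis out vis' : List V) : Prop :=
  (∀ x, x ∈ vis' ↔ x ∈ out ∨ x ∈ vis) ∧ out.Nodup ∧ ∀ x ∈ out, x ∉ vis

namespace ExtendsBy

variable {vis vis' vis'' out out' : List V}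

theorem refl (vis : List V) : ExtendsBy vis [] vis :=
  ⟨by simp, List.nodup_nil, by simp⟩

theorem subset (h : ExtendsBy vis out vis') : vis ⊆ vis' :=
  fun x hx => (h.1 x).2 (Or.inr hx)

theorem trans (h : ExtendsBy vis out vis') (h' : ExtendsBy vis' out' vis'') :
    ExtendsBy vis (out ++ out') vis'' := by
  obtain ⟨hmem, hnd, hfresh⟩ := h
  obtain ⟨hmem', hnd', hfresh'⟩ := h'
  refine ⟨fun x => ?_, hnd.append hnd' fun x hx hx' => hfresh' x hx' ((hmem x).2 (.inl hx)), ?_⟩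
  · rw [hmem', hmem, List.mem_append]
    tauto
  · intro x hx
    rcases List.mem_append.1 hx with hx | hx
    · exact hfresh x hx
    · exact fun hxvis => hfresh' x hx ((hmem x).2 (.inr hxvis))

theorem of_cons {v : V} (h : ExtendsBy (v :: vis) out vis') (hv : v ∉ vis) :
    ExtendsBy vis (v :: out) vis' := by
  obtain ⟨hmem, hnd, hfresh⟩ := h
  refine ⟨fun x => ?_, List.nodup_cons.2 ⟨fun hvo => hfresh v hvo List.mem_cons_self, hnd⟩,
    ?_⟩
  · rw [hmem, List.mem_cons, List.mem_cons]
    tauto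
  · intro x hx
    rcases List.mem_cons.1 hx with rfl | hx
    · exact hv
    · exact fun hxvis => hfresh x hx (List.mem_cons_of_mem _ hxvis)

theorem perm (h : ExtendsBy vis out vis') (hp : out.Perm out') : ExtendsBy vis out' vis' :=
  ⟨fun x => by rw [h.1 x, hp.mem_iff], hp.nodup_iff.1 h.2.1,
    fun x hx => h.2.2 x (hp.mem_iff.2 hx)⟩

end ExtendsBy

-- Measured with `edist`, whose triangle inequality needs no connectedness.
def IsHopChain (G : SimpleGraph V) (v : V) (a b : ℕ) (l : List V) : Prop :=
  l.IsChain (fun x y => G.edist x y ≤ 3) ∧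
    (∀ x ∈ l.head?, G.edist x v ≤ a) ∧ ∀ x ∈ l.getLast?, G.edist x v ≤ b

namespace IsHopChain

variable {G : SimpleGraph V} {v w : V} {a b a' b' : ℕ} {l l' : List V}

theorem nil : IsHopChain G v a b [] :=
  ⟨List.isChain_nil, by simp, by simp⟩

theorem mono (h : IsHopChain G v a b l) (ha : a ≤ a') (hb : b ≤ b') : IsHopChain G v a' b' l :=
  ⟨h.1, fun x hx => (h.2.1 x hx).trans (by exact_mod_cast ha),
    fun x hx => (h.2.2 x hx).trans (by exact_mod_cast hb)⟩

theorem append (h : IsHopChain G v a b l) (h' : IsHopChain G v a b l') (hab : b + a ≤ 3) :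
    IsHopChain G v a b (l ++ l') := by
  obtain ⟨hc, hhead, hlast⟩ := h
  obtain ⟨hc', hhead', hlast'⟩ := h'
  refine ⟨hc.append hc' fun x hx y hy => ?_, fun x hx => ?_, fun x hx => ?_⟩
  · calc G.edist x y ≤ G.edist x v + G.edist v y := SimpleGraph.edist_triangle
      _ ≤ b + a := add_le_add (hlast x hx) (SimpleGraph.edist_comm ▸ hhead' y hy)
      _ ≤ 3 := by exact_mod_cast hab
  · rcases eq_or_ne l [] with rfl | hne
    · exact hhead' x hx
    · exact hhead x (List.head?_append_of_ne_nil _ hne ▸ hx)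
  · rcases eq_or_ne l' [] with rfl | hne
    · exact hlast x (by simpa using hx)
    · exact hlast' x (List.getLast?_append_of_ne_nil _ hne ▸ hx)

theorem of_adj (h : IsHopChain G w a b l) (hvw : G.Adj v w) : IsHopChain G v (a + 1) (b + 1) l := by
  have hwv : G.edist w v = 1 := SimpleGraph.edist_eq_one_iff_adj.2 hvw.symm
  have shift : ∀ x (c : ℕ), G.edist x w ≤ c → G.edist x v ≤ ↑(c + 1) := fun x c hx =>
    calc G.edist x v ≤ G.edist x w + G.edist w v := SimpleGraph.edist_triangle
      _ ≤ ↑(c + 1) := by rw [hwv]; push_cast; gcongr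
  exact ⟨h.1, fun x hx => shift x a (h.2.1 x hx), fun x hx => shift x b (h.2.2 x hx)⟩

theorem cons_self (h : IsHopChain G v a b l) (ha : a ≤ 3) : IsHopChain G v 0 b (v :: l) := by
  refine ⟨h.1.cons fun y hy => ?_, by simp, fun x hx => ?_⟩
  · rw [SimpleGraph.edist_comm]
    exact (h.2.1 y hy).trans (by exact_mod_cast ha)
  · rcases eq_or_ne l [] with rfl | hne
    · simp_all
    · rw [← List.singleton_append, List.getLast?_append_of_ne_nil _ hne] at hx
      exact h.2.2 x hx

theorem append_self (h : IsHopChain G v a b l) (hb : b ≤ 3) : IsHopChain G v a 0 (l ++ [v]) := by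
  refine ⟨h.1.append (List.isChain_singleton v) fun x hx y hy => ?_, fun x hx => ?_, by simp⟩
  · obtain rfl : y = v := by simpa using hy.symm
    exact (h.2.2 x hx).trans (by exact_mod_cast hb)
  · rcases eq_or_ne l [] with rfl | hne
    · simp_all
    · exact h.2.1 x (List.head?_append_of_ne_nil _ hne ▸ hx)

end IsHopChain

section Dfs

variable [DecidableEq V] (adj : V → List V)

def dfsStep (fuel d : ℕ) (p : List V × List V) (w : V) : List V × List V :=
  if w ∈ p.1 then p
  else ((dfsOut adj fuel p.1 w (d + 1)).1, p.2 ++ (dfsOut adj fuel p.1 w (d + 1)).2)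

def dfsChildren (fuel : ℕ) (vis : List V) (v : V) (d : ℕ) : List V × List V :=
  (adj v).foldl (dfsStep adj fuel d) (v :: vis, [])

theorem dfsOut_succ (fuel : ℕ) (vis : List V) (v : V) (d : ℕ) :
    dfsOut adj (fuel + 1) vis v d =
      if d % 2 = 0 then ((dfsChildren adj fuel vis v d).1, v :: (dfsChildren adj fuel vis v d).2)
      else ((dfsChildren adj fuel vis v d).1, (dfsChildren adj fuel vis v d).2 ++ [v]) :=
  rfl

theorem dfsOut_succ_fst (fuel : ℕ) (vis : List V) (v : V) (d : ℕ) :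
    (dfsOut adj (fuel + 1) vis v d).1 = (dfsChildren adj fuel vis v d).1 := by
  rw [dfsOut_succ]
  split_ifs <;> rfl

theorem extendsBy_dfsOut (fuel : ℕ) {vis : List V} {v : V} (d : ℕ) (hv : v ∉ vis) :
    ExtendsBy vis (dfsOut adj fuel vis v d).2 (dfsOut adj fuel vis v d).1 := by
  induction fuel generalizing vis v d with
  | zero => exact ExtendsBy.refl vis
  | succ fuel ih =>
    have hchildren : ExtendsBy (v :: vis) (dfsChildren adj fuel vis v d).2
        (dfsChildren adj fuel vis v d).1 :=
      List.foldlRecOn (motive := fun p : List V × List V => ExtendsBy (v :: vis) p.2 p.1)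
        _ _ (ExtendsBy.refl _) fun p hp w _ => by
          unfold dfsStep
          split_ifs with hw
          · exact hp
          · exact hp.trans (ih (d + 1) hw)
    rw [dfsOut_succ]
    split_ifs
    · exact hchildren.of_cons hv
    · exact (hchildren.of_cons hv).perm (List.perm_append_singleton _ _).symm

theorem isHopChain_dfsOut {G : SimpleGraph V} (hadj : ∀ u, ∀ w ∈ adj u, G.Adj u w)
    (fuel : ℕ) (vis : List V) (v : V) (d : ℕ) :
    IsHopChain G v (d % 2) ((d + 1) % 2) (dfsOut adj fuel vis v d).2 := by
  induction fuel generalizing vis v d with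
  | zero => exact IsHopChain.nil
  | succ fuel ih =>
    have hchildren : IsHopChain G v ((d + 1) % 2 + 1) ((d + 2) % 2 + 1)
        (dfsChildren adj fuel vis v d).2 :=
      List.foldlRecOn
        (motive := fun p : List V × List V =>
          IsHopChain G v ((d + 1) % 2 + 1) ((d + 2) % 2 + 1) p.2)
        _ _ IsHopChain.nil fun p hp w hw => by
          unfold dfsStep
          split_ifs
          · exact hp
          · exact hp.append ((ih _ w (d + 1)).of_adj (hadj v w hw)) (by omega)
    rw [dfsOut_succ]
    split_ifs with hd
    · exact (hchildren.cons_self (by omega)).mono (by omega) (by omega)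
    · exact (hchildren.append_self (by omega)).mono (by omega) (by omega)

def IsAdjClosedOff (S R : List V) : Prop :=
  ∀ x ∈ R, x ∉ S → ∀ y ∈ adj x, y ∈ R

theorem IsAdjClosedOff.trans {S P R : List V} (h : IsAdjClosedOff adj S P)
    (h' : IsAdjClosedOff adj P R) (hPR : P ⊆ R) : IsAdjClosedOff adj S R := by
  intro x hx hxS y hy
  by_cases hxP : x ∈ P
  · exact hPR (h x hxP hxS y hy)
  · exact h' x hx hxP y hy

theorem card_compl_toFinset_le_of_subset [Fintype V] {l l' : List V} (h : l ⊆ l') :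
    l'.toFinsetᶜ.card ≤ l.toFinsetᶜ.card :=
  Finset.card_le_card <| Finset.compl_subset_compl.2 fun _ hx =>
    List.mem_toFinset.2 (h (List.mem_toFinset.1 hx))

theorem card_compl_toFinset_cons [Fintype V] {v : V} {l : List V} (hv : v ∉ l) :
    (v :: l).toFinsetᶜ.card + 1 = l.toFinsetᶜ.card := by
  have hv' : v ∉ l.toFinset := List.mem_toFinset.not.2 hv
  have hle := (insert v l.toFinset).card_le_univ
  rw [Finset.card_insert_of_notMem hv'] at hle
  rw [List.toFinset_cons, Finset.card_compl, Finset.card_compl, Finset.card_insert_of_notMem hv']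
  omega

def ExploresWith [Fintype V] (fuel : ℕ) : Prop :=
  ∀ (vis : List V) (v : V) (d : ℕ), v ∉ vis → vis.toFinsetᶜ.card ≤ fuel →
    v ∈ (dfsOut adj fuel vis v d).1 ∧ IsAdjClosedOff adj vis (dfsOut adj fuel vis v d).1

variable [Fintype V] {adj} {fuel d : ℕ}

theorem dfsStep_closed (hrec : ExploresWith adj fuel) {S : List V}
    (hS : S.toFinsetᶜ.card ≤ fuel) {p : List V × List V} (hSp : S ⊆ p.1)
    (hp : IsAdjClosedOff adj S p.1) (w : V) :
    p.1 ⊆ (dfsStep adj fuel d p w).1 ∧ w ∈ (dfsStep adj fuel d p w).1 ∧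
      IsAdjClosedOff adj S (dfsStep adj fuel d p w).1 := by
  unfold dfsStep
  split_ifs with hw
  · exact ⟨List.Subset.refl _, hw, hp⟩
  · have hsub := (extendsBy_dfsOut adj fuel (d + 1) hw).subset
    obtain ⟨hmem, hclosed⟩ :=
      hrec p.1 w (d + 1) hw ((card_compl_toFinset_le_of_subset hSp).trans hS)
    exact ⟨hsub, hmem, hp.trans adj hclosed hsub⟩

theorem foldl_dfsStep_closed (hrec : ExploresWith adj fuel) {S : List V}
    (hS : S.toFinsetᶜ.card ≤ fuel) (L : List V) {p : List V × List V} (hSp : S ⊆ p.1)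
    (hp : IsAdjClosedOff adj S p.1) :
    p.1 ⊆ (L.foldl (dfsStep adj fuel d) p).1 ∧
      (∀ w ∈ L, w ∈ (L.foldl (dfsStep adj fuel d) p).1) ∧
      IsAdjClosedOff adj S (L.foldl (dfsStep adj fuel d) p).1 := by
  induction L generalizing p with
  | nil => exact ⟨List.Subset.refl _, by simp, hp⟩
  | cons w L ih =>
    obtain ⟨hsub, hw, hclosed⟩ := dfsStep_closed hrec hS hSp hp w (d := d)
    obtain ⟨hsub', hL, hclosed'⟩ := ih (List.Subset.trans hSp hsub) hclosed
    refine ⟨List.Subset.trans hsub hsub', ?_, hclosed'⟩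
    rintro x (_ | ⟨_, hx⟩)
    exacts [hsub' hw, hL x hx]

theorem ExploresWith.succ (hrec : ExploresWith adj fuel) : ExploresWith adj (fuel + 1) := by
  intro vis v d hv hfuel
  have hS : (v :: vis).toFinsetᶜ.card ≤ fuel := by
    have := card_compl_toFinset_cons hv
    omega
  obtain ⟨hsub, hadjv, hclosed⟩ := foldl_dfsStep_closed (d := d) hrec hS (adj v)
    (p := (v :: vis, [])) (List.Subset.refl _) (fun x hx hxS => absurd hx hxS)
  rw [dfsOut_succ_fst]
  refine ⟨hsub List.mem_cons_self, fun x hx hxvis y hy => ?_⟩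
  by_cases hxv : x = v
  · exact hadjv y (hxv ▸ hy)
  · exact hclosed x hx (by simp [hxv, hxvis]) y hy

theorem exploresWith (fuel : ℕ) : ExploresWith adj fuel := by
  induction fuel with
  | zero =>
    intro vis v _ hv hfuel
    have : 0 < vis.toFinsetᶜ.card :=
      Finset.card_pos.2 ⟨v, Finset.mem_compl.2 (List.mem_toFinset.not.2 hv)⟩
    omega
  | succ fuel ih => exact ih.succ

end Dfs

/-- Performing a DFS from a root `r` in a finite connected graph, outputting
even-depth vertices at discovery and odd-depth vertices at completion,
produces an ordering of all vertices in which consecutive vertices have graph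
distance at most 3. -/
theorem stmt1 {V : Type} [Fintype V] [DecidableEq V] (G : SimpleGraph V)
    (adj : V → List V) (hadj : ∀ u w : V, w ∈ adj u ↔ G.Adj u w)
    (hconn : G.Connected) (r : V) :
    ∀ out : List V, out = (dfsOut adj (Fintype.card V) [] r 0).2 →
      out.Nodup ∧ (∀ v : V, v ∈ out) ∧
      ∀ i, (h : i + 1 < out.length) →
        G.dist (out.get ⟨i, by omega⟩) (out.get ⟨i + 1, h⟩) ≤ 3 := by
  rintro out rfl
  obtain ⟨hmem, hnodup, -⟩ :=
    extendsBy_dfsOut adj (Fintype.card V) 0 (List.not_mem_nil (a := r))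
  obtain ⟨hr, hclosed⟩ := exploresWith (adj := adj) (Fintype.card V) [] r 0 List.not_mem_nil
    (by simp)
  have hvisited (v : V) : v ∈ (dfsOut adj (Fintype.card V) [] r 0).1 :=
    (hconn.preconnected r v).mem_of_forall_adj_mem
      (s := {x | x ∈ (dfsOut adj (Fintype.card V) [] r 0).1}) hr
      fun x hx y hxy => hclosed x hx List.not_mem_nil y ((hadj x y).2 hxy)
  have hchain := (isHopChain_dfsOut adj (fun u w => (hadj u w).1) (Fintype.card V) [] r 0).1
  refine ⟨hnodup, fun v => by simpa using (hmem v).1 (hvisited v), fun i h => ?_⟩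
  exact SimpleGraph.dist_le_of_edist_le (List.isChain_iff_getElem.1 hchain i h)
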